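/- Let G = (V,E,c) be an edge-weighted directed graph without negative-weight closed walks. Let (i,j) ∈ E with both endpoints in the same ∼-equivalence class [v_k] and with c_{ij} = d_{ij} (the minimum walk weight from i to j). Then any walk from i to j in G of weight exactly d_{ij} traverses only nodes in [v_k]. -/

import Mathlib

/-- `l` is a walk in edge set `E`: a nonempty list of vertices with consecutive edges. -/
def IsWalk {V : Type*} (E : Set (V × V)) (l : List V) : Prop :=
  l ≠ [] ∧ l.Chain' (fun a b => (a, b) ∈ E)

/-- The weight of a walk: sum of edge weights along consecutive pairs (with multiplicity). -/
def walkWeight {V : Type*} (c : V → V → ℝ) (l : List V) : ℝ :=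
  ((l.zip l.tail).map fun p => c p.1 p.2).sum

/-- `l` is a walk from `u` to `v`. -/
def IsWalkFrom {V : Type*} (E : Set (V × V)) (u v : V) (l : List V) : Prop :=
  IsWalk E l ∧ l.head? = some u ∧ l.getLast? = some v

/-- A closed walk: a walk with at least one edge whose first and last vertices agree. -/
def IsClosedWalk {V : Type*} (E : Set (V × V)) (l : List V) : Prop :=
  IsWalk E l ∧ 2 ≤ l.length ∧ l.head? = l.getLast?

/-- A simple path from `u` to `v`: a walk with all traversed vertices distinct. -/
def IsPathFrom {V : Type*} (E : Set (V × V)) (u v : V) (l : List V) : Prop :=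
  IsWalkFrom E u v l ∧ l.Nodup

/-- A cycle: a closed walk all of whose vertices other than the repeated endpoint are distinct. -/
def IsCycle {V : Type*} (E : Set (V × V)) (l : List V) : Prop :=
  IsClosedWalk E l ∧ l.tail.Nodup

/-- `x` satisfies the precedence relation system of `(V, E, c)`. -/
def Satisfies {V : Type*} (E : Set (V × V)) (c : V → V → ℝ) (x : V → ℝ) : Prop :=
  ∀ e ∈ E, x e.1 - x e.2 ≤ c e.1 e.2

/-- `R` is a redundant edge set of `(V, E, c)`: every edge of `R` has a replacement path
in the reduced graph of no greater weight. -/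
def IsRedundantEdgeSet {V : Type*} (E : Set (V × V)) (c : V → V → ℝ)
    (R : Set (V × V)) : Prop :=
  R ⊆ E ∧ ∀ e ∈ R, ∃ l, IsPathFrom (E \ R) e.1 e.2 l ∧ walkWeight c l ≤ c e.1 e.2

/-- `w` is the minimum weight of a walk from `i` to `j` in `(V, E, c)` (attained). -/
def IsMinWalkWeight {V : Type*} (E : Set (V × V)) (c : V → V → ℝ) (i j : V) (w : ℝ) : Prop :=
  (∃ l, IsWalkFrom E i j l ∧ walkWeight c l = w) ∧
  ∀ l, IsWalkFrom E i j l → w ≤ walkWeight c l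

/-- The relation `∼`: `i ∼ j` iff `i = j` or some zero-weight closed walk traverses both. -/
def Sim {V : Type*} (E : Set (V × V)) (c : V → V → ℝ) (i j : V) : Prop :=
  i = j ∨ ∃ l, IsClosedWalk E l ∧ walkWeight c l = 0 ∧ i ∈ l ∧ j ∈ l

/-!
If `l` is a walk from `i` to `j` of weight `d_ij`, append to it a walk from `j` back to `i` of
weight at most `-d_ij`: one exists because the zero-weight closed walk through `i` and `j` splits
into a walk `i → j`, of weight at least `d_ij`, and a walk `j → i`. The result is a closed walk of
weight at most `0`, hence exactly `0`, through `i` and every vertex of `l`.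
-/

lemma List.two_le_length_of_mem_of_ne {α : Type*} {l : List α} {a b : α} (ha : a ∈ l)
    (hb : b ∈ l) (hab : a ≠ b) : 2 ≤ l.length := by
  match l with
  | [] | [_] => simp_all
  | _ :: _ :: _ => simp

section Walks

variable {V : Type*} {E : Set (V × V)} {c : V → V → ℝ}

@[simp]
lemma walkWeight_singleton (c : V → V → ℝ) (x : V) : walkWeight c [x] = 0 := by
  simp [walkWeight]

@[simp]
lemma walkWeight_cons_cons (c : V → V → ℝ) (x y : V) (l : List V) :
    walkWeight c (x :: y :: l) = c x y + walkWeight c (y :: l) := by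
  simp [walkWeight]

lemma walkWeight_append_cons (c : V → V → ℝ) (a : List V) (v : V) (b : List V) :
    walkWeight c (a ++ v :: b) = walkWeight c (a ++ [v]) + walkWeight c (v :: b) := by
  induction a with
  | nil => simp
  | cons x a ih =>
    cases a with
    | nil => simp
    | cons y a =>
      simp only [List.cons_append, walkWeight_cons_cons] at ih ⊢
      rw [ih, add_assoc]

lemma isWalk_iff {l : List V} : IsWalk E l ↔ l ≠ [] ∧ l.IsChain (fun a b => (a, b) ∈ E) :=
  Iff.rfl

lemma isWalkFrom_append_cons_iff {u v z : V} {a b : List V} :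
    IsWalkFrom E u z (a ++ v :: b) ↔
      IsWalkFrom E u v (a ++ [v]) ∧ IsWalkFrom E v z (v :: b) := by
  simp only [IsWalkFrom, isWalk_iff]
  rw [List.isChain_split, List.getLast?_append_cons]
  simp only [List.getLast?_concat, List.head?_append, List.head?_cons, Option.or_some, ne_eq,
    List.append_eq_nil_iff, List.cons_ne_nil, and_false, not_false_eq_true, true_and]
  tauto

lemma IsWalkFrom.exists_eq_cons {u v : V} {l : List V} (h : IsWalkFrom E u v l) :
    ∃ b, l = u :: b :=
  List.head?_eq_some_iff.mp h.2.1

lemma IsWalkFrom.exists_eq_append_singleton {u v : V} {l : List V} (h : IsWalkFrom E u v l) :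
    ∃ a, l = a ++ [v] :=
  List.getLast?_eq_some_iff.mp h.2.2

lemma IsWalkFrom.head_mem {u v : V} {l : List V} (h : IsWalkFrom E u v l) : u ∈ l :=
  List.mem_of_mem_head? h.2.1

lemma IsWalkFrom.trans {u v z : V} {p q : List V} (hp : IsWalkFrom E u v p)
    (hq : IsWalkFrom E v z q) :
    ∃ r, IsWalkFrom E u z r ∧ walkWeight c r = walkWeight c p + walkWeight c q ∧
      ∀ t, t ∈ r ↔ t ∈ p ∨ t ∈ q := by
  obtain ⟨a, rfl⟩ := hp.exists_eq_append_singleton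
  obtain ⟨b, rfl⟩ := hq.exists_eq_cons
  refine ⟨a ++ v :: b, isWalkFrom_append_cons_iff.mpr ⟨hp, hq⟩,
    walkWeight_append_cons c a v b, fun t => ?_⟩
  simp only [List.mem_append, List.mem_cons]
  tauto

lemma IsClosedWalk.exists_isWalkFrom {l : List V} (h : IsClosedWalk E l) :
    ∃ x, IsWalkFrom E x x l := by
  obtain ⟨hl, -, hends⟩ := h
  obtain ⟨x, hx⟩ := Option.isSome_iff_exists.mp (List.isSome_head?.mpr hl.1)
  exact ⟨x, hl, hx, hends ▸ hx⟩

lemma IsWalkFrom.isClosedWalk {x : V} {l : List V} (h : IsWalkFrom E x x l)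
    (hl : 2 ≤ l.length) : IsClosedWalk E l :=
  ⟨h.1, hl, h.2.1.trans h.2.2.symm⟩

/-- Rotating a closed walk to start at `u` and cutting it at `v`. -/
lemma IsClosedWalk.exists_walks_of_mem {w : List V} (hw : IsClosedWalk E w) {u v : V}
    (hu : u ∈ w) (hv : v ∈ w) :
    ∃ p q, IsWalkFrom E u v p ∧ IsWalkFrom E v u q ∧
      walkWeight c p + walkWeight c q = walkWeight c w := by
  obtain ⟨x, hx⟩ := hw.exists_isWalkFrom
  obtain ⟨a, b, rfl⟩ := List.append_of_mem hu
  obtain ⟨hxu, hux⟩ := isWalkFrom_append_cons_iff.mp hx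
  obtain ⟨r, hr, hrw, hrmem⟩ := hux.trans (c := c) hxu
  have hvr : v ∈ r := by
    rw [hrmem]
    simpa [or_comm, or_left_comm, or_assoc] using hv
  obtain ⟨a', b', rfl⟩ := List.append_of_mem hvr
  obtain ⟨huv, hvu⟩ := isWalkFrom_append_cons_iff.mp hr
  refine ⟨_, _, huv, hvu, ?_⟩
  rw [← walkWeight_append_cons, hrw, walkWeight_append_cons c a u b, add_comm]

lemma Sim.exists_walk_weight_le_neg {i j : V} {d : ℝ} (hsim : Sim E c i j)
    (hd : ∀ l, IsWalkFrom E i j l → d ≤ walkWeight c l) :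
    ∃ p, IsWalkFrom E j i p ∧ walkWeight c p ≤ -d := by
  rcases hsim with rfl | ⟨w, hw, hw0, hi, hj⟩
  · have hi : IsWalkFrom E i i [i] := ⟨⟨List.cons_ne_nil _ _, List.isChain_singleton _⟩, rfl, rfl⟩
    refine ⟨[i], hi, ?_⟩
    have := hd [i] hi
    simp only [walkWeight_singleton] at this ⊢
    linarith
  · obtain ⟨p, q, hp, hq, hpq⟩ := hw.exists_walks_of_mem (c := c) hj hi
    refine ⟨p, hp, ?_⟩
    linarith [hd q hq]

end Walks

theorem stmt17_general {V : Type*} (E : Set (V × V)) (c : V → V → ℝ)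
    (hnn : ∀ l : List V, IsClosedWalk E l → 0 ≤ walkWeight c l)
    (i j : V) (hsim : Sim E c i j)
    (dij : ℝ) (hd : IsMinWalkWeight E c i j dij) :
    ∀ l : List V, IsWalkFrom E i j l → walkWeight c l = dij →
      ∀ t ∈ l, Sim E c t i := by
  intro l hl hlw t ht
  by_cases hti : t = i
  · exact Or.inl hti
  obtain ⟨p, hp, hpw⟩ := hsim.exists_walk_weight_le_neg hd.2
  obtain ⟨r, hr, hrw, hrmem⟩ := hl.trans (c := c) hp
  have htr : t ∈ r := (hrmem t).mpr (Or.inl ht)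
  have hclosed : IsClosedWalk E r :=
    hr.isClosedWalk (List.two_le_length_of_mem_of_ne htr hr.head_mem hti)
  have hr0 : walkWeight c r = 0 := le_antisymm (by linarith) (hnn r hclosed)
  exact Or.inr ⟨r, hclosed, hr0, htr, hr.head_mem⟩

theorem stmt17 {V : Type*} (E : Set (V × V)) (c : V → V → ℝ)
    (hnn : ∀ l : List V, IsClosedWalk E l → 0 ≤ walkWeight c l)
    (i j : V) (hij : (i, j) ∈ E) (hsim : Sim E c i j)
    (dij : ℝ) (hd : IsMinWalkWeight E c i j dij) (hc : c i j = dij) :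
    ∀ l : List V, IsWalkFrom E i j l → walkWeight c l = dij →
      ∀ t ∈ l, Sim E c t i :=
  stmt17_general E c hnn i j hsim dij hd
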